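/- Christofides bound: in a complete metric graph, if T is a spanning tree of weight at most (1+ε) times the minimum spanning tree weight, O is the set of odd-degree vertices of T, and M is a minimum-weight perfect matching on O, then w(T) + w(M) ≤ (3/2 + ε) times the minimum cost of a Hamiltonian cycle. -/

import Mathlib

/-!
Deleting an edge from the Hamiltonian cycle leaves a spanning tree, so `w(T) ≤ (1 + ε) · w(c)`.
By the handshake lemma `O` has even size; listing it in the order the cycle visits it, the closed
tour through `O` splits alternately into two perfect matchings on `O`, and by the triangle
inequality (shortcutting) the tour costs at most `w(c)`. Hence `2 · w(M) ≤ w(c)`.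
-/

/-- Weight of a subgraph: the sum of the weights of its edges. -/
noncomputable def graphWeight {V : Type*} [Fintype V] (H : SimpleGraph V)
    (w : Sym2 V → ℝ) : ℝ :=
  ∑ e ∈ H.edgeSet.toFinite.toFinset, w e

/-- `M` is a perfect matching on the vertex set `O` in the complete graph. -/
def IsPerfectMatchingOn {V : Type*} (M : Finset (Sym2 V)) (O : Finset V) : Prop :=
  (↑M ⊆ (⊤ : SimpleGraph V).edgeSet) ∧
    ((M : Set (Sym2 V)).Pairwise fun e f => ∀ v : V, v ∈ e → v ∉ f) ∧
    (∀ v : V, v ∈ O ↔ ∃ e ∈ M, v ∈ e)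

open SimpleGraph

section

variable {V : Type*}

section Weights

variable {w : Sym2 V → ℝ}

lemma weight_nonneg_of_triangle (htri : ∀ u v x : V, w s(u, v) ≤ w s(u, x) + w s(x, v))
    (e : Sym2 V) : 0 ≤ w e := by
  induction e with
  | _ u v =>
    have hu := htri u u u
    have huv := htri u u v
    rw [Sym2.eq_swap (a := v)] at huv
    linarith

/-- The weight of the polygonal path through the vertices of `l`, in order. -/
noncomputable def chainWeight (w : Sym2 V → ℝ) : List V → ℝ
  | a :: b :: l => w s(a, b) + chainWeight w (b :: l)
  | _ => 0

lemma SimpleGraph.Walk.sum_edges_eq_chainWeight_support {G : SimpleGraph V} {u v : V}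
    (p : G.Walk u v) :
    (p.edges.map w).sum = chainWeight w p.support := by
  induction p with
  | nil => rfl
  | cons h q ih =>
    rw [Walk.edges_cons, List.map_cons, List.sum_cons, ih, Walk.support_cons,
      ← q.cons_tail_support]
    rfl

variable (htri : ∀ u v x : V, w s(u, v) ≤ w s(u, x) + w s(x, v))
include htri

lemma chainWeight_cons_le (a x : V) (l : List V) :
    chainWeight w (a :: l) ≤ w s(a, x) + chainWeight w (x :: l) := by
  cases l with
  | nil => simpa [chainWeight] using weight_nonneg_of_triangle htri s(a, x)
  | cons b l =>
    simp only [chainWeight]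
    linarith [htri a b x]

/-- Shortcutting: skipping vertices does not increase the weight of a path. -/
lemma chainWeight_cons_le_of_sublist {l₁ l₂ : List V} (h : l₁.Sublist l₂) (a : V) :
    chainWeight w (a :: l₁) ≤ chainWeight w (a :: l₂) := by
  induction h generalizing a with
  | slnil => rfl
  | @cons l₁ _ x _ ih =>
    simp only [chainWeight]
    linarith [chainWeight_cons_le htri a x l₁, ih x]
  | cons_cons x _ ih =>
    simp only [chainWeight]
    linarith [ih x]

end Weights

section PairUp

def pairUp : List V → List (Sym2 V)
  | a :: b :: l => s(a, b) :: pairUp l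
  | _ => []

lemma mem_of_mem_pairUp : ∀ {l : List V} {e : Sym2 V}, e ∈ pairUp l → ∀ x ∈ e, x ∈ l
  | a :: b :: l, e, he, x, hx => by
    rcases List.mem_cons.mp he with rfl | he
    · rcases Sym2.mem_iff.mp hx with rfl | rfl <;> simp
    · exact List.mem_cons_of_mem _ (List.mem_cons_of_mem _ (mem_of_mem_pairUp he x hx))

lemma exists_mem_pairUp : ∀ {l : List V}, Even l.length → ∀ x ∈ l, ∃ e ∈ pairUp l, x ∈ e
  | [], _, x, hx => by simp at hx
  | [_], h, _, _ => by simp at h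
  | a :: b :: l, h, x, hx => by
    rcases List.mem_cons.mp hx with rfl | hx
    · exact ⟨s(x, b), List.mem_cons_self, Sym2.mem_mk_left x b⟩
    rcases List.mem_cons.mp hx with rfl | hx
    · exact ⟨s(a, x), List.mem_cons_self, Sym2.mem_mk_right a x⟩
    obtain ⟨e, he, hxe⟩ := exists_mem_pairUp (by simpa [Nat.even_add_one] using h) x hx
    exact ⟨e, List.mem_cons_of_mem _ he, hxe⟩

lemma pairwise_disjoint_pairUp : ∀ {l : List V}, l.Nodup →
    (pairUp l).Pairwise fun e f => ∀ x, x ∈ e → x ∉ f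
  | a :: b :: l, hl => by
    simp only [List.nodup_cons, List.mem_cons, not_or] at hl
    refine List.Pairwise.cons (fun f hf x hx hxf => ?_) (pairwise_disjoint_pairUp hl.2.2)
    have hxl := mem_of_mem_pairUp hf x hxf
    rcases Sym2.mem_iff.mp hx with rfl | rfl
    exacts [hl.1.2 hxl, hl.2.1 hxl]
  | [], _ | [_], _ => List.Pairwise.nil

lemma not_isDiag_of_mem_pairUp : ∀ {l : List V}, l.Nodup → ∀ e ∈ pairUp l, ¬e.IsDiag
  | a :: b :: l, hl, e, he => by
    simp only [List.nodup_cons, List.mem_cons, not_or] at hl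
    rcases List.mem_cons.mp he with rfl | he
    · simpa using hl.1.1
    · exact not_isDiag_of_mem_pairUp hl.2.2 e he

lemma nodup_pairUp {l : List V} (hl : l.Nodup) : (pairUp l).Nodup :=
  (pairwise_disjoint_pairUp hl).imp fun {e _} h he => by
    subst he
    exact h _ (Sym2.out_fst_mem e) (Sym2.out_fst_mem e)

lemma isPerfectMatchingOn_pairUp [DecidableEq V] {l : List V} (hl : l.Nodup)
    (hev : Even l.length) : IsPerfectMatchingOn (pairUp l).toFinset l.toFinset := by
  refine ⟨fun e he => ?_, ?_, fun x => ?_⟩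
  · simpa using not_isDiag_of_mem_pairUp hl e (List.mem_toFinset.mp he)
  · have : Std.Symm fun e f : Sym2 V => ∀ x, x ∈ e → x ∉ f := ⟨fun _ _ h x hf he => h x he hf⟩
    rw [List.coe_toFinset]
    exact (pairwise_disjoint_pairUp hl).set_pairwise
  · simp only [List.mem_toFinset]
    exact ⟨exists_mem_pairUp hev x, fun ⟨e, he, hxe⟩ => mem_of_mem_pairUp he x hxe⟩

lemma sum_toFinset_pairUp [DecidableEq V] (w : Sym2 V → ℝ) {l : List V} (hl : l.Nodup) :
    ∑ e ∈ (pairUp l).toFinset, w e = ((pairUp l).map w).sum :=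
  List.sum_toFinset w (nodup_pairUp hl)

/-- The closed polygon `a, l₁, …, lₖ, z` with `k` odd splits into its two alternate sets of
edges. -/
lemma sum_pairUp_add_sum_pairUp (w : Sym2 V → ℝ) :
    ∀ {l : List V}, Odd l.length → ∀ a z : V,
      ((pairUp (a :: l)).map w).sum + ((pairUp (l ++ [z])).map w).sum =
        chainWeight w (a :: l ++ [z])
  | [], h, _, _ => by simp at h
  | [b], _, a, z => by simp [pairUp, chainWeight]
  | b :: c :: l, h, a, z => by
    have ih := sum_pairUp_add_sum_pairUp w (l := l) (by simpa [Nat.odd_add_one] using h) c z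
    simp only [List.cons_append, pairUp, chainWeight, List.map_cons, List.sum_cons] at ih ⊢
    linarith

end PairUp

section Tour

variable [DecidableEq V] {w : Sym2 V → ℝ} (htri : ∀ u v x : V, w s(u, v) ≤ w s(u, x) + w s(x, v))
  {G : SimpleGraph V} {v : V} {c : G.Walk v v}
include htri

/-- The vertices of `O` in the order in which `c`, rotated to start at `u`, visits them. -/
lemma SimpleGraph.Walk.IsHamiltonianCycle.exists_tour_le (hc : c.IsHamiltonianCycle)
    {O : Finset V} {u : V} (hu : u ∈ O) :
    ∃ l : List V, (l ++ [u]).Nodup ∧ (l ++ [u]).toFinset = O ∧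
      chainWeight w (u :: l ++ [u]) ≤ (c.edges.map w).sum := by
  set c' := c.rotate u (hc.mem_support u)
  have hc' : c'.IsHamiltonianCycle := hc.rotate _
  set L := c'.tail.support.dropLast
  have hsupp_tail : c'.support.tail = L ++ [u] := by
    rw [← c'.support_tail_of_not_nil hc'.not_nil, c'.tail.dropLast_support_concat]
  have hmem (x : V) : x ∈ L ++ [u] := by
    rw [← hsupp_tail, ← c'.support_tail_of_not_nil hc'.not_nil]
    exact hc'.isHamiltonian_tail.mem_support x
  have hfilter : (L ++ [u]).filter (· ∈ O) = L.filter (· ∈ O) ++ [u] := by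
    simp [List.filter_append, hu]
  refine ⟨L.filter (· ∈ O), hfilter ▸ (hsupp_tail ▸ hc'.isCycle.support_nodup).filter _, ?_, ?_⟩
  · ext x
    simp only [List.mem_toFinset, ← hfilter, List.mem_filter, decide_eq_true_eq]
    exact ⟨And.right, fun hx => ⟨hmem x, hx⟩⟩
  · calc chainWeight w (u :: L.filter (· ∈ O) ++ [u])
        ≤ chainWeight w (u :: (L ++ [u])) :=
          chainWeight_cons_le_of_sublist htri (List.filter_sublist.append_right [u]) u
      _ = chainWeight w c'.support := by rw [← hsupp_tail, c'.cons_tail_support]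
      _ = (c.edges.map w).sum := by
          rw [← Walk.sum_edges_eq_chainWeight_support]
          exact ((c.rotate_edges u _).perm.map w).sum_eq

lemma exists_isPerfectMatchingOn_sum_add_sum_le (hc : c.IsHamiltonianCycle) {O : Finset V}
    (hO : Even O.card) :
    ∃ M₁ M₂, IsPerfectMatchingOn M₁ O ∧ IsPerfectMatchingOn M₂ O ∧
      ∑ e ∈ M₁, w e + ∑ e ∈ M₂, w e ≤ (c.edges.map w).sum := by
  rcases O.eq_empty_or_nonempty with rfl | ⟨u, hu⟩
  · refine ⟨∅, ∅, ⟨by simp, by simp, by simp⟩, ⟨by simp, by simp, by simp⟩, ?_⟩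
    simpa using List.sum_nonneg
      (List.forall_mem_map.mpr fun e _ => weight_nonneg_of_triangle htri e)
  obtain ⟨l, hnodup, hset, htour⟩ := hc.exists_tour_le htri hu
  have hperm := List.perm_append_singleton u l
  have hnodup' : (u :: l).Nodup := hperm.nodup_iff.mp hnodup
  have hset' : (u :: l).toFinset = O := by rw [← hset, List.toFinset_eq_of_perm _ _ hperm.symm]
  have hev : Even (l.length + 1) := by
    have hcard := List.toFinset_card_of_nodup hnodup
    rw [hset, List.length_append, List.length_singleton] at hcard
    exact hcard ▸ hO
  refine ⟨_, _, hset' ▸ isPerfectMatchingOn_pairUp hnodup' hev,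
    hset ▸ isPerfectMatchingOn_pairUp hnodup (by simpa using hev), ?_⟩
  rwa [sum_toFinset_pairUp w hnodup', sum_toFinset_pairUp w hnodup,
    sum_pairUp_add_sum_pairUp w (Nat.not_even_iff_odd.mp (Nat.even_add_one.mp hev))]

end Tour

section SpanningTree

variable [Fintype V] [DecidableEq V] {G : SimpleGraph V} {u v : V}

lemma SimpleGraph.Walk.IsHamiltonian.isTree_spanningCoe_toSubgraph {p : G.Walk u v}
    (hp : p.IsHamiltonian) : p.toSubgraph.spanningCoe.IsTree := by
  have hedges : p.toSubgraph.spanningCoe.edgeSet = p.edgeSet := by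
    rw [Subgraph.edgeSet_spanningCoe, Walk.edgeSet_toSubgraph]
  have hreach (x : V) : p.toSubgraph.spanningCoe.Reachable u x :=
    ⟨(p.takeUntil x (hp.mem_support x)).transfer _ fun e he =>
      hedges ▸ p.edges_takeUntil_subset_edges _ he⟩
  have : Nonempty V := ⟨u⟩
  refine isTree_iff_connected_and_card.mpr
    ⟨Connected.mk fun x y => (hreach x).symm.trans (hreach y), ?_⟩
  have hcard : Nat.card p.edgeSet = p.length := by
    rw [← p.length_edges, ← List.toFinset_card_of_nodup hp.isPath.isTrail.edges_nodup,
      ← Nat.card_eq_finsetCard]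
    simp [Walk.edgeSet]
  rw [hedges, hcard, hp.length_eq, Nat.card_eq_fintype_card, Nat.sub_add_cancel Fintype.card_pos]

lemma graphWeight_spanningCoe_toSubgraph {p : G.Walk u v} (hp : p.IsTrail)
    (w : Sym2 V → ℝ) : graphWeight p.toSubgraph.spanningCoe w = (p.edges.map w).sum := by
  rw [graphWeight, ← List.sum_toFinset w hp.edges_nodup]
  congr 1
  ext e
  simp [Subgraph.edgeSet_spanningCoe]

end SpanningTree

end

theorem christofides_bound_general {V : Type*} [Fintype V] [DecidableEq V]
    (w : Sym2 V → ℝ)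
    (htri : ∀ u v x : V, w s(u, v) ≤ w s(u, x) + w s(x, v))
    (ε : ℝ) (hε : 0 ≤ ε)
    (T : SimpleGraph V)
    (hTapprox : ∀ T' : SimpleGraph V, T'.Connected → T'.IsAcyclic →
      graphWeight T w ≤ (1 + ε) * graphWeight T' w)
    (O : Finset V) (hO : ∀ u : V, u ∈ O ↔ Odd (Nat.card (T.neighborSet u)))
    (M : Finset (Sym2 V))
    (hMmin : ∀ M' : Finset (Sym2 V), IsPerfectMatchingOn M' O →
      ∑ e ∈ M, w e ≤ ∑ e ∈ M', w e)
    (v : V) (c : (⊤ : SimpleGraph V).Walk v v) (hc : c.IsHamiltonianCycle) :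
    graphWeight T w + ∑ e ∈ M, w e ≤ (3 / 2 + ε) * (c.edges.map w).sum := by
  classical
  have hpath := hc.isHamiltonian_tail
  have htree := hpath.isTree_spanningCoe_toSubgraph
  have hT : graphWeight T w ≤ (1 + ε) * (c.edges.map w).sum :=
    calc graphWeight T w
        ≤ (1 + ε) * graphWeight c.tail.toSubgraph.spanningCoe w :=
          hTapprox _ htree.connected htree.isAcyclic
      _ = (1 + ε) * (c.tail.edges.map w).sum := by
          rw [graphWeight_spanningCoe_toSubgraph hpath.isPath.isTrail]
      _ ≤ (1 + ε) * (c.edges.map w).sum := by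
          rw [Walk.edges_tail, List.map_tail]
          gcongr
          exact (List.tail_sublist _).sum_le_sum
            (List.forall_mem_map.mpr fun e _ => weight_nonneg_of_triangle htri e)
  have hOeven : Even O.card := by
    convert T.even_card_odd_degree_vertices
    ext u
    simp [hO, ← card_neighborSet_eq_degree, Nat.card_eq_fintype_card]
  obtain ⟨M₁, M₂, hM₁, hM₂, hsum⟩ := exists_isPerfectMatchingOn_sum_add_sum_le htri hc hOeven
  linarith [hMmin M₁ hM₁, hMmin M₂ hM₂]

/-- Christofides bound: in a complete graph with edge weights satisfying the
triangle inequality, if `T` is a spanning tree of weight at most `(1+ε)` times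
the minimum spanning tree weight, `O` is the set of odd-degree vertices of
`T`, and `M` is a minimum-weight perfect matching on `O`, then
`w(T) + w(M) ≤ (3/2 + ε)` times the cost of any Hamiltonian cycle (so in
particular of the TSP optimum). -/
theorem christofides_bound {V : Type*} [Fintype V] [DecidableEq V]
    (w : Sym2 V → ℝ)
    (htri : ∀ u v x : V, w s(u, v) ≤ w s(u, x) + w s(x, v))
    (ε : ℝ) (hε : 0 ≤ ε)
    (T : SimpleGraph V) (hTconn : T.Connected) (hTacyc : T.IsAcyclic)
    (hTapprox : ∀ T' : SimpleGraph V, T'.Connected → T'.IsAcyclic →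
      graphWeight T w ≤ (1 + ε) * graphWeight T' w)
    (O : Finset V) (hO : ∀ u : V, u ∈ O ↔ Odd (Nat.card (T.neighborSet u)))
    (M : Finset (Sym2 V)) (hM : IsPerfectMatchingOn M O)
    (hMmin : ∀ M' : Finset (Sym2 V), IsPerfectMatchingOn M' O →
      ∑ e ∈ M, w e ≤ ∑ e ∈ M', w e)
    (v : V) (c : (⊤ : SimpleGraph V).Walk v v) (hc : c.IsHamiltonianCycle) :
    graphWeight T w + ∑ e ∈ M, w e ≤ (3 / 2 + ε) * (c.edges.map w).sum :=
  christofides_bound_general w htri ε hε T hTapprox O hO M hMmin v c hc
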